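/- arXiv:2012.11215 — 2 statements merged into one kernel-verified Lean document; each statement's English description precedes it below -/
import Mathlib

section
/- Under assumptions (A1), (A2), (A4) and the testing logic, for every distribution consistent with the data the joint probability P(x=1,z=1|t=1) satisfies P(y=1,z=1|t=1) + max{0, χ̄ − γ − P(y=0,z=0|t=1)} ≤ P(x=1,z=1|t=1) ≤ min{ χ̄ − γ + P(y=1,z=1|t=1), ζ }, where χ̄ = γ/σ; and these bounds are sharp: each endpoint is attained by some distribution consistent with the data. -/
/-!
Population model: a pmf `P` on `{0,1}^4` over `(x, y, z, t)` where `x = true` means truly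
infected, `y` is the established test result, `z` the new test result, and `t = true` means
the person belongs to the testing pool.  The testing logic requires `z = 1 → t = 1`.
-/

namespace PaperTest

abbrev Dist := Bool → Bool → Bool → Bool → ℝ

/-- Probability of the event `A` under `P`. -/
noncomputable def pr (P : Dist) (A : Bool → Bool → Bool → Bool → Bool) : ℝ :=
  ∑ x : Bool, ∑ y : Bool, ∑ z : Bool, ∑ t : Bool, if A x y z t then P x y z t else 0

/-- Conditional probability `P(A | B)`. -/
noncomputable def cpr (P : Dist) (A B : Bool → Bool → Bool → Bool → Bool) : ℝ :=
  pr P (fun x y z t => A x y z t && B x y z t) / pr P B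

def IsPMF (P : Dist) : Prop :=
  (∀ x y z t, 0 ≤ P x y z t) ∧
    (∑ x : Bool, ∑ y : Bool, ∑ z : Bool, ∑ t : Bool, P x y z t) = 1

/-- Testing logic: `z = 1` implies `t = 1`, i.e. there is no mass on `z = 1 ∧ t = 0`. -/
def TestLogic (P : Dist) : Prop := ∀ x y, P x y true false = 0

/-- Prevalence `p = P(x=1)`. -/
noncomputable def prev (P : Dist) : ℝ := pr P fun x _ _ _ => x

/-- Sensitivity of the established test, `σ = P(y=1 | x=1)`. -/
noncomputable def sens (P : Dist) : ℝ := cpr P (fun _ y _ _ => y) (fun x _ _ _ => x)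

/-- `τ = P(t=1)`. -/
noncomputable def tau (P : Dist) : ℝ := pr P fun _ _ _ t => t

/-- `γ = P(y=1 | t=1)`. -/
noncomputable def gamma (P : Dist) : ℝ := cpr P (fun _ y _ _ => y) (fun _ _ _ t => t)

/-- `ζ = P(z=1 | t=1)`. -/
noncomputable def zeta (P : Dist) : ℝ := cpr P (fun _ _ z _ => z) (fun _ _ _ t => t)

/-- `χ̄ = γ/σ`, the prevalence in the testing pool. -/
noncomputable def chibar (P : Dist) : ℝ := gamma P / sens P

/-- (A1) non-trivial prevalence. -/
def A1 (P : Dist) : Prop := 0 < prev P ∧ prev P < 1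

/-- (A2) no false positives for the established test: `P(x=0, y=1) = 0`. -/
def A2 (P : Dist) : Prop := pr P (fun x y _ _ => !x && y) = 0

/-- (A3) test monotonicity: `P(x=1 | t=1) ≥ P(x=1 | t=0)`. -/
def A3 (P : Dist) : Prop :=
  cpr P (fun x _ _ _ => x) (fun _ _ _ t => t) ≥ cpr P (fun x _ _ _ => x) (fun _ _ _ t => !t)

/-- (A4) health sufficiency: `P(y=1 | x=1, t=1) = P(y=1 | x=1) = σ`. -/
def A4 (P : Dist) : Prop := cpr P (fun _ y _ _ => y) (fun x _ _ t => x && t) = sens P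

/-- `P(y=1, z=1 | t=1)`. -/
noncomputable def q11 (P : Dist) : ℝ := cpr P (fun _ y z _ => y && z) (fun _ _ _ t => t)

/-- `P(y=1, z=0 | t=1)`. -/
noncomputable def q10 (P : Dist) : ℝ := cpr P (fun _ y z _ => y && !z) (fun _ _ _ t => t)

/-- `P(y=0, z=1 | t=1)`. -/
noncomputable def q01 (P : Dist) : ℝ := cpr P (fun _ y z _ => !y && z) (fun _ _ _ t => t)

/-- `P(y=0, z=0 | t=1)`. -/
noncomputable def q00 (P : Dist) : ℝ := cpr P (fun _ y z _ => !y && !z) (fun _ _ _ t => t)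

/-- `Q` induces the same conditional data distribution `P(y, z | t=1)` and the same
sensitivity `σ` of the established test as `P`. -/
def SameData (P Q : Dist) : Prop :=
  (∀ y0 z0 : Bool,
      cpr Q (fun _ y z _ => (y == y0) && (z == z0)) (fun _ _ _ t => t) =
        cpr P (fun _ y z _ => (y == y0) && (z == z0)) (fun _ _ _ t => t)) ∧
    sens Q = sens P

/-- Assumptions (A1), (A2), (A4), the testing logic, and the maintained regularity
conditions `γ, ζ > 0`, `P(t=1) > 0`, and `γ < σ ≤ 1`. -/
def Setup (P : Dist) : Prop :=
  IsPMF P ∧ TestLogic P ∧ A1 P ∧ A2 P ∧ A4 P ∧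
    0 < gamma P ∧ 0 < zeta P ∧ 0 < tau P ∧ gamma P < sens P ∧ sens P ≤ 1

/-- `Q` is consistent with the data of `P`: it satisfies all assumptions and induces the
same `P(y, z | t=1)` and the same `σ`. -/
def Consistent (P Q : Dist) : Prop := Setup Q ∧ SameData P Q

/-! ### Auxiliary lemmas -/

lemma pr_nonneg {P : Dist} (hP : ∀ x y z t, 0 ≤ P x y z t)
    (A : Bool → Bool → Bool → Bool → Bool) : 0 ≤ pr P A := by
  unfold pr
  refine Finset.sum_nonneg fun x _ => Finset.sum_nonneg fun y _ => Finset.sum_nonneg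
    fun z _ => Finset.sum_nonneg fun t _ => ?_
  split <;> simp [hP]

lemma cpr_nonneg {P : Dist} (hP : ∀ x y z t, 0 ≤ P x y z t)
    (A B : Bool → Bool → Bool → Bool → Bool) : 0 ≤ cpr P A B :=
  div_nonneg (pr_nonneg hP _) (pr_nonneg hP _)

lemma gamma_eq {P : Dist} : gamma P = q11 P + q10 P := by
  rw [show gamma P = pr P (fun x y z t => y && t) / pr P (fun _ _ _ t => t) from rfl,
      show q11 P = pr P (fun x y z t => (y && z) && t) / pr P (fun _ _ _ t => t) from rfl,
      show q10 P = pr P (fun x y z t => (y && !z) && t) / pr P (fun _ _ _ t => t) from rfl,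
      ← add_div]
  congr 1
  simp [pr, Fintype.sum_bool]
  ring

lemma zeta_eq {P : Dist} : zeta P = q11 P + q01 P := by
  rw [show zeta P = pr P (fun x y z t => z && t) / pr P (fun _ _ _ t => t) from rfl,
      show q11 P = pr P (fun x y z t => (y && z) && t) / pr P (fun _ _ _ t => t) from rfl,
      show q01 P = pr P (fun x y z t => (!y && z) && t) / pr P (fun _ _ _ t => t) from rfl,
      ← add_div]
  congr 1
  simp [pr, Fintype.sum_bool]
  ring

lemma q_sum {P : Dist} (hT : 0 < tau P) :
    q11 P + q10 P + q01 P + q00 P = 1 := by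
  have hT' : pr P (fun _ _ _ t => t) ≠ 0 := ne_of_gt hT
  rw [show q11 P = pr P (fun x y z t => (y && z) && t) / pr P (fun _ _ _ t => t) from rfl,
      show q10 P = pr P (fun x y z t => (y && !z) && t) / pr P (fun _ _ _ t => t) from rfl,
      show q01 P = pr P (fun x y z t => (!y && z) && t) / pr P (fun _ _ _ t => t) from rfl,
      show q00 P = pr P (fun x y z t => (!y && !z) && t) / pr P (fun _ _ _ t => t) from rfl,
      ← add_div, ← add_div, ← add_div, div_eq_one_iff_eq hT']
  simp [pr, Fintype.sum_bool]
  ring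

lemma e11 {P : Dist} :
    cpr P (fun _ y z _ => (y == true) && (z == true)) (fun _ _ _ t => t) = q11 P := by
  simp [cpr, q11, pr, Fintype.sum_bool]

lemma e10 {P : Dist} :
    cpr P (fun _ y z _ => (y == true) && (z == false)) (fun _ _ _ t => t) = q10 P := by
  simp [cpr, q10, pr, Fintype.sum_bool]

lemma e01 {P : Dist} :
    cpr P (fun _ y z _ => (y == false) && (z == true)) (fun _ _ _ t => t) = q01 P := by
  simp [cpr, q01, pr, Fintype.sum_bool]

lemma e00 {P : Dist} :
    cpr P (fun _ y z _ => (y == false) && (z == false)) (fun _ _ _ t => t) = q00 P := by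
  simp [cpr, q00, pr, Fintype.sum_bool]

/-- Bundle of basic facts about a distribution satisfying `Setup`. -/
lemma facts {P : Dist} (h : Setup P) :
    0 < sens P ∧ 0 ≤ q11 P ∧ 0 ≤ q10 P ∧ 0 ≤ q01 P ∧ 0 ≤ q00 P ∧
      0 < chibar P ∧ gamma P ≤ chibar P ∧ chibar P < 1 := by
  obtain ⟨⟨hn, _⟩, _, _, _, _, hγ, hζ, hτ, hγσ, hσ1⟩ := h
  have hσ : 0 < sens P := hγ.trans hγσ
  refine ⟨hσ, cpr_nonneg hn _ _, cpr_nonneg hn _ _, cpr_nonneg hn _ _, cpr_nonneg hn _ _,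
    div_pos hγ hσ, ?_, (div_lt_one hσ).2 hγσ⟩
  rw [chibar, le_div_iff₀ hσ]
  nlinarith

/-! ### The bounds -/

set_option maxHeartbeats 1600000 in
lemma bound_aux (P Q : Dist) (h : Setup P) (hc : Consistent P Q) :
    q11 P + max 0 (chibar P - gamma P - q00 P) ≤
        cpr Q (fun x _ z _ => x && z) (fun _ _ _ t => t) ∧
      cpr Q (fun x _ z _ => x && z) (fun _ _ _ t => t) ≤
        min (chibar P - gamma P + q11 P) (zeta P) := by
  obtain ⟨hQ, hsd⟩ := hc
  obtain ⟨⟨hQn, hQs⟩, hQtl, hQ1, hQ2, hQ4, hQγ, hQζ, hQτ, hQγσ, hQσ1⟩ := hQ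
  obtain ⟨hσP, hq11n, hq10n, hq01n, hq00n, hχ, hγχ, hχ1⟩ := facts h
  obtain ⟨_, _, _, _, _, hγP, hζP, hτP, hγσP, hσ1P⟩ := h
  have hT : 0 < pr Q (fun _ _ _ t => t) := hQτ
  have hTn : pr Q (fun _ _ _ t => t) ≠ 0 := ne_of_gt hT
  -- A2 for Q: the x=0, y=1 entries vanish
  have hA2 : pr Q (fun x y _ _ => !x && y) = 0 := hQ2
  simp [pr, Fintype.sum_bool] at hA2
  have z1 : Q false true true true = 0 := by
    linarith [hQn false true true true, hQn false true true false, hQn false true false true,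
      hQn false true false false]
  have z2 : Q false true false true = 0 := by
    linarith [hQn false true true true, hQn false true true false, hQn false true false true,
      hQn false true false false]
  -- same data, turned into equations on entries
  have key11 : pr Q (fun x y z t => ((y == true) && (z == true)) && t) /
      pr Q (fun _ _ _ t => t) = q11 P := by
    have h' := hsd.1 true true; rw [e11] at h'; exact h'
  have key10 : pr Q (fun x y z t => ((y == true) && (z == false)) && t) /
      pr Q (fun _ _ _ t => t) = q10 P := by
    have h' := hsd.1 true false; rw [e10] at h'; exact h'
  have key01 : pr Q (fun x y z t => ((y == false) && (z == true)) && t) /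
      pr Q (fun _ _ _ t => t) = q01 P := by
    have h' := hsd.1 false true; rw [e01] at h'; exact h'
  have key00 : pr Q (fun x y z t => ((y == false) && (z == false)) && t) /
      pr Q (fun _ _ _ t => t) = q00 P := by
    have h' := hsd.1 false false; rw [e00] at h'; exact h'
  rw [div_eq_iff hTn] at key11 key10 key01 key00
  have n11 : pr Q (fun x y z t => ((y == true) && (z == true)) && t) =
      Q true true true true + Q false true true true := by
    simp [pr, Fintype.sum_bool]
  have n10 : pr Q (fun x y z t => ((y == true) && (z == false)) && t) =
      Q true true false true + Q false true false true := by
    simp [pr, Fintype.sum_bool]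
  have n01 : pr Q (fun x y z t => ((y == false) && (z == true)) && t) =
      Q true false true true + Q false false true true := by
    simp [pr, Fintype.sum_bool]
  have n00 : pr Q (fun x y z t => ((y == false) && (z == false)) && t) =
      Q true false false true + Q false false false true := by
    simp [pr, Fintype.sum_bool]
  rw [n11] at key11; rw [n10] at key10; rw [n01] at key01; rw [n00] at key00
  -- A4 for Q
  have hA4 : pr Q (fun x y z t => y && (x && t)) / pr Q (fun x y z t => x && t) = sens P := by
    have h' := hQ4.trans hsd.2; exact h'
  have nA4 : pr Q (fun x y z t => y && (x && t)) =
      Q true true true true + Q true true false true := by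
    simp [pr, Fintype.sum_bool]
  have dA4 : pr Q (fun x y z t => x && t) =
      Q true true true true + Q true true false true +
        Q true false true true + Q true false false true := by
    simp [pr, Fintype.sum_bool]
    ring
  have hD0 : pr Q (fun x y z t => x && t) ≠ 0 := by
    intro h0
    rw [h0, div_zero] at hA4
    linarith
  rw [div_eq_iff hD0] at hA4
  rw [nA4, dA4] at hA4
  -- the number of interest
  have htarget : cpr Q (fun x _ z _ => x && z) (fun _ _ _ t => t) =
      (Q true true true true + Q true false true true) / pr Q (fun _ _ _ t => t) := by
    rw [show cpr Q (fun x _ z _ => x && z) (fun _ _ _ t => t) =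
        pr Q (fun x y z t => (x && z) && t) / pr Q (fun _ _ _ t => t) from rfl]
    congr 1
    simp [pr, Fintype.sum_bool]
  set T := pr Q (fun _ _ _ t => t) with hTdef
  have u0 : 0 ≤ Q true false true true := hQn _ _ _ _
  have v0 : 0 ≤ Q true false false true := hQn _ _ _ _
  have uub : Q true false true true ≤ q01 P * T := by
    linarith [hQn false false true true]
  have vub : Q true false false true ≤ q00 P * T := by
    linarith [hQn false false false true]
  have hq11T : Q true true true true = q11 P * T := by linarith
  have hq10T : Q true true false true = q10 P * T := by linarith
  have hgamT : Q true true true true + Q true true false true = gamma P * T := by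
    rw [hq11T, hq10T, gamma_eq]; ring
  have hσn : sens P ≠ 0 := ne_of_gt hσP
  have h5 : sens P * (Q true false true true + Q true false false true) =
      gamma P * T - sens P * (gamma P * T) := by
    rw [hq11T, hq10T] at hA4
    rw [gamma_eq]
    linarith [hA4]
  have hh : chibar P * sens P = gamma P := by rw [chibar]; field_simp
  have huv : Q true false true true + Q true false false true =
      (chibar P - gamma P) * T := by
    have h6 : sens P * ((Q true false true true + Q true false false true) -
        (chibar P - gamma P) * T) = 0 := by linear_combination h5 - T * hh
    have h7 := (mul_eq_zero.1 h6).resolve_left hσn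
    linarith
  rw [htarget]
  constructor
  · rw [le_div_iff₀ hT]
    rcases le_total (chibar P - gamma P - q00 P) 0 with hcc | hcc
    · rw [max_eq_left hcc]
      linarith
    · rw [max_eq_right hcc]
      linarith
  · rw [div_le_iff₀ hT]
    rcases le_total (chibar P - gamma P + q11 P) (zeta P) with hcc | hcc
    · rw [min_eq_left hcc]
      linarith
    · have hz : zeta P = q11 P + q01 P := zeta_eq
      rw [min_eq_right hcc, hz]
      linarith

/-! ### The construction attaining the bounds -/

/-- A distribution carrying the same data as `P`, whose `t = 1` part has
`Q(x=1,y=0,z=1|t=1) = a01` and `Q(x=1,y=0,z=0|t=1) = a00`. -/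
noncomputable def mk (P : Dist) (a01 a00 : ℝ) : Dist := fun x y z t =>
  if t then
    (if x then (if y then (if z then q11 P else q10 P) else (if z then a01 else a00))
     else (if y then 0 else (if z then q01 P - a01 else q00 P - a00))) / 2
  else
    if z then 0 else
      (if x then (if y then gamma P else chibar P - gamma P)
       else (if y then 0 else 1 - chibar P)) / 2

set_option maxHeartbeats 1600000 in
lemma exists_mk (P : Dist) (h : Setup P) (a01 a00 : ℝ)
    (h01 : 0 ≤ a01) (h01' : a01 ≤ q01 P) (h00 : 0 ≤ a00) (h00' : a00 ≤ q00 P)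
    (hab : a01 + a00 = chibar P - gamma P) :
    ∃ Q : Dist, Consistent P Q ∧
      cpr Q (fun x _ z _ => x && z) (fun _ _ _ t => t) = q11 P + a01 := by
  obtain ⟨hσP, hq11n, hq10n, hq01n, hq00n, hχ, hγχ, hχ1⟩ := facts h
  obtain ⟨hpmf, htl, ha1, ha2, ha4, hγP, hζP, hτP, hγσP, hσ1P⟩ := h
  have hσn : sens P ≠ 0 := ne_of_gt hσP
  have hγn : gamma P ≠ 0 := ne_of_gt hγP
  have hsq : q11 P + q10 P + q01 P + q00 P = 1 := q_sum hτP
  have hgam : gamma P = q11 P + q10 P := gamma_eq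
  have hzet : zeta P = q11 P + q01 P := zeta_eq
  set W : Dist := mk P a01 a00 with hW
  -- values of the relevant probabilities
  have prT : pr W (fun _ _ _ t => t) = 1 / 2 := by
    simp [hW, mk, pr, Fintype.sum_bool]
    linarith
  have prX : pr W (fun x y z t => (x : Bool)) = chibar P := by
    simp [hW, mk, pr, Fintype.sum_bool]
    linarith
  have prXY : pr W (fun x y z t => y && x) = gamma P := by
    simp [hW, mk, pr, Fintype.sum_bool]
    linarith
  have prYT : pr W (fun x y z t => y && t) = gamma P / 2 := by
    simp [hW, mk, pr, Fintype.sum_bool]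
    linarith
  have prZT : pr W (fun x y z t => z && t) = zeta P / 2 := by
    simp [hW, mk, pr, Fintype.sum_bool]
    linarith
  have prXT : pr W (fun x y z t => x && t) = chibar P / 2 := by
    simp [hW, mk, pr, Fintype.sum_bool]
    linarith
  have prYXT : pr W (fun x y z t => y && (x && t)) = gamma P / 2 := by
    simp [hW, mk, pr, Fintype.sum_bool]
    linarith
  have prXZT : pr W (fun x y z t => (x && z) && t) = (q11 P + a01) / 2 := by
    simp [hW, mk, pr, Fintype.sum_bool]
    linarith
  have hsensW : sens W = sens P := by
    rw [show sens W = pr W (fun x y z t => y && x) / pr W (fun x y z t => (x : Bool)) from rfl,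
        prXY, prX, chibar]
    field_simp
  have hχn : chibar P ≠ 0 := ne_of_gt hχ
  refine ⟨W, ⟨⟨⟨?_, ?_⟩, ?_, ⟨?_, ?_⟩, ?_, ?_, ?_, ?_, ?_, ?_, ?_⟩, ?_, hsensW⟩, ?_⟩
  · -- nonneg
    intro x y z t
    cases x <;> cases y <;> cases z <;> cases t <;> simp [hW, mk] <;> linarith
  · -- sums to 1
    simp [hW, mk, Fintype.sum_bool]
    linarith
  · -- TestLogic
    intro x y
    cases x <;> cases y <;> simp [hW, mk]
  · -- A1 lower
    rw [show prev W = pr W (fun x y z t => (x : Bool)) from rfl, prX]; exact hχ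
  · -- A1 upper
    rw [show prev W = pr W (fun x y z t => (x : Bool)) from rfl, prX]; exact hχ1
  · -- A2
    rw [show A2 W ↔ pr W (fun x y _ _ => !x && y) = 0 from Iff.rfl]
    simp [hW, mk, pr, Fintype.sum_bool]
  · -- A4
    rw [show A4 W ↔ (pr W (fun x y z t => y && (x && t)) / pr W (fun x y z t => x && t)
        = sens W) from Iff.rfl, prYXT, prXT, hsensW, chibar]
    field_simp
  · -- gamma W > 0
    rw [show gamma W = pr W (fun x y z t => y && t) / pr W (fun _ _ _ t => t) from rfl,
        prYT, prT]
    positivity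
  · -- zeta W > 0
    rw [show zeta W = pr W (fun x y z t => z && t) / pr W (fun _ _ _ t => t) from rfl,
        prZT, prT]
    positivity
  · -- tau W > 0
    rw [show tau W = pr W (fun _ _ _ t => t) from rfl, prT]
    norm_num
  · -- gamma W < sens W
    rw [show gamma W = pr W (fun x y z t => y && t) / pr W (fun _ _ _ t => t) from rfl,
        prYT, prT, hsensW]
    simpa using hγσP
  · -- sens W ≤ 1
    rw [hsensW]; exact hσ1P
  · -- same data
    intro y0 z0
    cases y0 <;> cases z0
    · rw [e00, e00,
        show q00 W = pr W (fun x y z t => (!y && !z) && t) / pr W (fun _ _ _ t => t) from rfl,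
        prT]
      have : pr W (fun x y z t => (!y && !z) && t) = q00 P / 2 := by
        simp [hW, mk, pr, Fintype.sum_bool] <;> linarith
      rw [this]; ring
    · rw [e01, e01,
        show q01 W = pr W (fun x y z t => (!y && z) && t) / pr W (fun _ _ _ t => t) from rfl,
        prT]
      have : pr W (fun x y z t => (!y && z) && t) = q01 P / 2 := by
        simp [hW, mk, pr, Fintype.sum_bool] <;> linarith
      rw [this]; ring
    · rw [e10, e10,
        show q10 W = pr W (fun x y z t => (y && !z) && t) / pr W (fun _ _ _ t => t) from rfl,
        prT]
      have : pr W (fun x y z t => (y && !z) && t) = q10 P / 2 := by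
        simp [hW, mk, pr, Fintype.sum_bool] <;> linarith
      rw [this]; ring
    · rw [e11, e11,
        show q11 W = pr W (fun x y z t => (y && z) && t) / pr W (fun _ _ _ t => t) from rfl,
        prT]
      have : pr W (fun x y z t => (y && z) && t) = q11 P / 2 := by
        simp [hW, mk, pr, Fintype.sum_bool] <;> linarith
      rw [this]; ring
  · -- the value
    rw [show cpr W (fun x _ z _ => x && z) (fun _ _ _ t => t) =
        pr W (fun x y z t => (x && z) && t) / pr W (fun _ _ _ t => t) from rfl, prXZT, prT]
    ring

/-- for every distribution consistent with the data, the joint probability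
`P(x=1, z=1 | t=1)` satisfies
`P(y=1,z=1|t=1) + max{0, χ̄ − γ − P(y=0,z=0|t=1)} ≤ P(x=1,z=1|t=1)
  ≤ min{χ̄ − γ + P(y=1,z=1|t=1), ζ}` with `χ̄ = γ/σ`, and these bounds are sharp. -/
theorem statement4 (P : Dist) (h : Setup P) :
    (∀ Q : Dist, Consistent P Q →
      q11 P + max 0 (chibar P - gamma P - q00 P) ≤
          cpr Q (fun x _ z _ => x && z) (fun _ _ _ t => t) ∧
        cpr Q (fun x _ z _ => x && z) (fun _ _ _ t => t) ≤
          min (chibar P - gamma P + q11 P) (zeta P)) ∧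
    (∃ Q : Dist, Consistent P Q ∧
      cpr Q (fun x _ z _ => x && z) (fun _ _ _ t => t) =
        q11 P + max 0 (chibar P - gamma P - q00 P)) ∧
    (∃ Q : Dist, Consistent P Q ∧
      cpr Q (fun x _ z _ => x && z) (fun _ _ _ t => t) =
        min (chibar P - gamma P + q11 P) (zeta P)) := by
  obtain ⟨hσP, hq11n, hq10n, hq01n, hq00n, hχ, hγχ, hχ1⟩ := facts h
  have hτP : 0 < tau P := h.2.2.2.2.2.2.2.1
  have hsq : q11 P + q10 P + q01 P + q00 P = 1 := q_sum hτP
  have hgam : gamma P = q11 P + q10 P := gamma_eq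
  have hzet : zeta P = q11 P + q01 P := zeta_eq
  have hc : 0 ≤ chibar P - gamma P := by linarith
  refine ⟨fun Q hQ => bound_aux P Q h hQ, ?_, ?_⟩
  · -- lower bound attained
    obtain ⟨Q, hQ, hval⟩ := exists_mk P h (max 0 (chibar P - gamma P - q00 P))
      (chibar P - gamma P - max 0 (chibar P - gamma P - q00 P))
      (le_max_left _ _)
      (by rcases le_total (chibar P - gamma P - q00 P) 0 with hh | hh
          · rw [max_eq_left hh]; linarith
          · rw [max_eq_right hh]; linarith)
      (by rcases le_total (chibar P - gamma P - q00 P) 0 with hh | hh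
          · rw [max_eq_left hh]; linarith
          · rw [max_eq_right hh]; linarith)
      (by rcases le_total (chibar P - gamma P - q00 P) 0 with hh | hh
          · rw [max_eq_left hh]; linarith
          · rw [max_eq_right hh]; linarith)
      (by ring)
    exact ⟨Q, hQ, hval⟩
  · -- upper bound attained
    obtain ⟨Q, hQ, hval⟩ := exists_mk P h (min (q01 P) (chibar P - gamma P))
      (chibar P - gamma P - min (q01 P) (chibar P - gamma P))
      (le_min hq01n hc)
      (min_le_left _ _)
      (by rcases le_total (q01 P) (chibar P - gamma P) with hh | hh
          · rw [min_eq_left hh]; linarith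
          · rw [min_eq_right hh]; linarith)
      (by rcases le_total (q01 P) (chibar P - gamma P) with hh | hh
          · rw [min_eq_left hh]; linarith
          · rw [min_eq_right hh]; linarith)
      (by ring)
    refine ⟨Q, hQ, ?_⟩
    rw [hval]
    rcases le_total (q01 P) (chibar P - gamma P) with hh | hh
    · rw [min_eq_left hh, min_eq_right (by linarith : zeta P ≤ chibar P - gamma P + q11 P), hzet]
    · rw [min_eq_right hh, min_eq_left (by linarith : chibar P - gamma P + q11 P ≤ zeta P)]
      ring

end PaperTest
end

section
/- (Corollary: Bounds Increase — PPV) Under assumptions (A1), (A2), (A4) and the testing logic, with P(y=1,z=1|t=1) > 0 and P(y=1,z=0|t=1) > 0, the sharp identified interval of the new test's PPV_z = P(x=1|z=1,t=1) contains the pre-test value χ̄ = P(x=1|t=1) if and only if σ ≤ min{ γ(1−ζ)/P(y=1,z=0|t=1), γζ/P(y=1,z=1|t=1) }; more precisely, the sharp upper bound of PPV_z is at least χ̄ if and only if σ ≤ γ(1−ζ)/P(y=1,z=0|t=1), and the sharp lower bound of PPV_z is at most χ̄ if and only if σ ≤ γζ/P(y=1,z=1|t=1). -/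
/-!
Population model: a pmf `P` on `{0,1}^4` over `(x, y, z, t)` where `x = true` means truly
infected, `y` is the established test result, `z` the new test result, and `t = true` means
the person belongs to the testing pool.  The testing logic requires `z = 1 → t = 1`.
-/

namespace PaperTest

/-- `P(y=1 | z=1, t=1)`. -/
noncomputable def pyGz (P : Dist) : ℝ := cpr P (fun _ y _ _ => y) (fun _ _ z t => z && t)

/-- Sharp lower bound of the identified interval of `PPV_z = P(x=1 | z=1, t=1)`. -/
noncomputable def ppvLo (P : Dist) : ℝ := max (pyGz P) (1 - (1 - chibar P) / zeta P)

/-- Sharp upper bound of the identified interval of `PPV_z = P(x=1 | z=1, t=1)`. -/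
noncomputable def ppvHi (P : Dist) : ℝ :=
  min 1 (pyGz P + chibar P * (1 - sens P) / zeta P)


private lemma arith_core (σ γ ζ a b : ℝ) (hσ : 0 < σ) (hζ : 0 < ζ) (hζ1 : ζ ≤ 1)
    (ha : 0 < a) (hb : 0 < b) (hγab : γ = a + b) (hγσ : γ < σ) :
    (γ/σ ∈ Set.Icc (max (a/ζ) (1 - (1 - γ/σ)/ζ)) (min 1 (a/ζ + (γ/σ)*(1-σ)/ζ)) ↔
      σ ≤ min (γ*(1-ζ)/b) (γ*ζ/a)) ∧
    (γ/σ ≤ min 1 (a/ζ + (γ/σ)*(1-σ)/ζ) ↔ σ ≤ γ*(1-ζ)/b) ∧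
    (max (a/ζ) (1 - (1 - γ/σ)/ζ) ≤ γ/σ ↔ σ ≤ γ*ζ/a) := by
  subst hγab
  have hχ1 : (a+b)/σ < 1 := (div_lt_one hσ).2 hγσ
  have hhi : ((a+b)/σ ≤ min 1 (a/ζ + ((a+b)/σ)*(1-σ)/ζ) ↔ σ ≤ (a+b)*(1-ζ)/b) := by
    rw [le_min_iff, and_iff_right hχ1.le, le_div_iff₀ hb]
    have e : a/ζ + ((a+b)/σ)*(1-σ)/ζ = (σ*a + (a+b)*(1-σ))/(σ*ζ) := by field_simp
    rw [e, div_le_div_iff₀ hσ (mul_pos hσ hζ)]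
    constructor <;> intro hh <;> nlinarith
  have hlo : (max (a/ζ) (1 - (1 - (a+b)/σ)/ζ) ≤ (a+b)/σ ↔ σ ≤ (a+b)*ζ/a) := by
    have h0 : (0:ℝ) ≤ 1 - (a+b)/σ := by linarith
    have h2 : 1 - (1 - (a+b)/σ)/ζ ≤ (a+b)/σ := by
      have h3 : 1 - (a+b)/σ ≤ (1 - (a+b)/σ)/ζ :=
        (le_div_iff₀ hζ).2 (mul_le_of_le_one_right h0 hζ1)
      linarith
    rw [max_le_iff, and_iff_left h2, div_le_div_iff₀ hζ hσ, le_div_iff₀ ha]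
    constructor <;> intro hh <;> nlinarith
  refine ⟨?_, hhi, hlo⟩
  rw [Set.mem_Icc, hhi, hlo, le_min_iff, and_comm]

/-- Corollary: Bounds Increase — PPV: with `P(y=1,z=1|t=1) > 0` and
`P(y=1,z=0|t=1) > 0`, the sharp identified interval of the new test's `PPV_z` contains the
pre-test value `χ̄ = P(x=1|t=1)` iff `σ ≤ min{γ(1−ζ)/P(y=1,z=0|t=1), γζ/P(y=1,z=1|t=1)}`;
more precisely the sharp upper bound is at least `χ̄` iff `σ ≤ γ(1−ζ)/P(y=1,z=0|t=1)`,
and the sharp lower bound is at most `χ̄` iff `σ ≤ γζ/P(y=1,z=1|t=1)`. -/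
theorem statement7 (P : Dist) (h : Setup P) (h11 : 0 < q11 P) (h10 : 0 < q10 P) :
    (chibar P ∈ Set.Icc (ppvLo P) (ppvHi P) ↔
      sens P ≤ min (gamma P * (1 - zeta P) / q10 P) (gamma P * zeta P / q11 P)) ∧
    (chibar P ≤ ppvHi P ↔ sens P ≤ gamma P * (1 - zeta P) / q10 P) ∧
    (ppvLo P ≤ chibar P ↔ sens P ≤ gamma P * zeta P / q11 P) := by
  obtain ⟨hpmf, htl, hA1, hA2, hA4, hγpos, hζpos, hτpos, hγσ, hσ1⟩ := h
  have hσ : 0 < sens P := hγpos.trans hγσ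
  -- `rfl` unfoldings of the conditional probabilities
  have e1 : pyGz P = pr P (fun _ y z t => y && (z && t)) / pr P (fun _ _ z t => z && t) := rfl
  have e2 : q11 P = pr P (fun _ y z t => (y && z) && t) / tau P := rfl
  have e3 : zeta P = pr P (fun _ _ z t => z && t) / tau P := rfl
  have e4 : gamma P = pr P (fun _ y _ t => y && t) / tau P := rfl
  have e5 : q10 P = pr P (fun _ y z t => (y && !z) && t) / tau P := rfl
  have hA : pr P (fun _ y z t => y && (z && t)) = pr P (fun _ y z t => (y && z) && t) := by
    simp [pr, Fintype.sum_bool]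
  have hC : pr P (fun _ y _ t => y && t) =
      pr P (fun _ y z t => (y && z) && t) + pr P (fun _ y z t => (y && !z) && t) := by
    simp [pr, Fintype.sum_bool]; ring
  have hτ : (0:ℝ) < tau P := hτpos
  have hBT : pr P (fun _ _ z t => z && t) ≤ tau P := by
    have hpos := hpmf.1
    show pr P (fun _ _ z t => z && t) ≤ pr P (fun _ _ _ t => t)
    simp only [pr, Fintype.sum_bool]
    simp
    nlinarith [hpos true true true true, hpos true true false true, hpos true false true true,
      hpos true false false true, hpos false true true true, hpos false true false true,
      hpos false false true true, hpos false false false true]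
  have hBeq : zeta P * tau P = pr P (fun _ _ z t => z && t) := by
    rw [e3]; field_simp
  have hB : 0 < pr P (fun _ _ z t => z && t) := by
    rw [← hBeq]; exact mul_pos hζpos hτ
  have hζ1 : zeta P ≤ 1 := by
    rw [e3]; exact (div_le_one hτ).2 hBT
  have hpy : pyGz P = q11 P / zeta P := by
    rw [e1, hA, e2, e3]
    field_simp
  have hγab : gamma P = q11 P + q10 P := by
    rw [e4, e2, e5, hC, add_div]
  unfold ppvLo ppvHi chibar
  rw [hpy]
  exact arith_core _ _ _ _ _ hσ hζpos hζ1 h11 h10 hγab hγσ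

end PaperTest
end
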